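/- Let ã, r̃ be real numbers with 0 < ã < 1 and r̃ > 1. For p ∈ (0,1), set r*(p) = max( ã/p, r̃ ). Define ε(p) = log( (1−p) / (1/r*(p) − p) ) for p ∈ (0,1) with p < 1/r*(p). Then ε(p) ≥ log( (r̃ − ã)/(1 − ã) ) for every p ∈ (0,1) with p < 1/r*(p), and ε(ã/r̃) = log( (r̃ − ã)/(1 − ã) ). -/

import Mathlib

/-!
Write `s = 1 / r*(p)`, so that `a s ≤ p` and `r s ≤ 1`. Since
`(r - a) s = (r - 1) (a s) + (1 - a) (r s) ≤ (r - 1) p + (1 - a)`, one gets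
`(r - a) (s - p) ≤ (1 - a) (1 - p)`, which is the bound. Equality holds at `p = a / r`,
where both constraints on `s = 1 / r` are tight.
-/

/-- The privacy-budget threshold `ε_i(p, 1)` (the `q̃ = 1` branch) under the risk profile
`r*(p,1) = max{ã/p, r̃}`. -/
noncomputable def epsThreshold19 (a r p : ℝ) : ℝ :=
  Real.log ((1 - p) / (1 / max (a / p) r - p))

lemma mul_one_div_max_div_le {a p : ℝ} (r : ℝ) (ha : 0 < a) (hp : 0 < p) :
    a * (1 / max (a / p) r) ≤ p := by
  have hmax : 0 < max (a / p) r := lt_max_of_lt_left (div_pos ha hp)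
  rw [mul_one_div, div_le_iff₀ hmax, ← div_le_iff₀' hp]
  exact le_max_left _ _

lemma mul_one_div_max_le {r : ℝ} (a p : ℝ) (hr : 0 < r) : r * (1 / max (a / p) r) ≤ 1 := by
  have hmax : 0 < max (a / p) r := lt_max_of_lt_right hr
  rw [mul_one_div, div_le_one hmax]
  exact le_max_right _ _

lemma sub_mul_sub_le_of_mul_le {a r p s : ℝ} (ha : a ≤ 1) (hr : 1 ≤ r)
    (has : a * s ≤ p) (hrs : r * s ≤ 1) : (r - a) * (s - p) ≤ (1 - a) * (1 - p) := by
  nlinarith [mul_nonneg (sub_nonneg.2 hr) (sub_nonneg.2 has),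
    mul_nonneg (sub_nonneg.2 ha) (sub_nonneg.2 hrs)]

lemma div_le_div_of_mul_le {a r p s : ℝ} (ha : a < 1) (hr : 1 ≤ r) (hps : p < s)
    (has : a * s ≤ p) (hrs : r * s ≤ 1) : (r - a) / (1 - a) ≤ (1 - p) / (s - p) := by
  rw [div_le_div_iff₀ (sub_pos.2 ha) (sub_pos.2 hps), mul_comm (1 - p)]
  exact sub_mul_sub_le_of_mul_le ha.le hr has hrs

theorem stmt_19 (a r : ℝ) (ha0 : 0 < a) (ha1 : a < 1) (hr : 1 < r) :
    (∀ p : ℝ, 0 < p → p < 1 → p < 1 / max (a / p) r →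
      Real.log ((r - a) / (1 - a)) ≤ epsThreshold19 a r p) ∧
    epsThreshold19 a r (a / r) = Real.log ((r - a) / (1 - a)) := by
  have hr0 : 0 < r := zero_lt_one.trans hr
  constructor
  · intro p hp0 _ hps
    exact Real.log_le_log (div_pos (by linarith) (by linarith))
      (div_le_div_of_mul_le ha1 hr.le hps (mul_one_div_max_div_le r ha0 hp0)
        (mul_one_div_max_le a p hr0))
  · rw [epsThreshold19, div_div_cancel₀ ha0.ne', max_self]
    congr 1
    field_simp
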